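/- arXiv:1608.02332 — 7 statements merged into one kernel-verified Lean document; each statement's English description precedes it below -/
import Mathlib

section
/- For every integer n ≥ 3, the Möbius ladder M_n is not total threshold colorable; that is, for all integers r ≥ t ≥ 0 there exists a subset N of the edge set of M_n such that M_n admits no (r,t)-threshold-coloring with respect to (N, E \ N). -/
/-- An `(r,t)`-threshold-coloring of the graph `G` with respect to the near-far-labeling
`(N, G.edgeSet \ N)`: a coloring with colors `{0, …, r-1}` such that the colors of the
endvertices of each near edge differ by at most `t`, and the colors of the endvertices of
each far edge differ by more than `t`. -/
def IsThresholdColoring {V : Type*} (G : SimpleGraph V) (N : Set (Sym2 V))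
    (r t : ℕ) (c : V → ℕ) : Prop :=
  (∀ v, c v < r) ∧
  (∀ ⦃u v⦄, G.Adj u v → s(u, v) ∈ N → |(c u : ℤ) - (c v : ℤ)| ≤ (t : ℤ)) ∧
  (∀ ⦃u v⦄, G.Adj u v → s(u, v) ∉ N → (t : ℤ) < |(c u : ℤ) - (c v : ℤ)|)

/-- The Möbius ladder `M_n`: the graph on `2*n` vertices `0, …, 2n-1` with the
peripheral edges `i ~ i+1` (indices mod `2n`) together with the `n` spokes `i ~ i+n`. -/
def mobiusLadder (n : ℕ) : SimpleGraph (ZMod (2 * n)) :=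
  SimpleGraph.fromRel fun i j => j = i + 1 ∨ j = i + (n : ZMod (2 * n))

/-- For every `n ≥ 3`, the Möbius ladder `M_n` is not total threshold colorable: for all
`r ≥ t ≥ 0` there is a near-far-labeling admitting no `(r,t)`-threshold-coloring. -/
theorem mobiusLadder_not_total_threshold_colorable (n : ℕ) (hn : 3 ≤ n) :
    ∀ r t : ℕ, t ≤ r →
      ∃ N ⊆ (mobiusLadder n).edgeSet,
        ¬ ∃ c : ZMod (2 * n) → ℕ, IsThresholdColoring (mobiusLadder n) N r t c := by
  intro r t _
  haveI : NeZero (2 * n) := ⟨by omega⟩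
  have hmod : ∀ a b : ℕ, ((a : ZMod (2 * n)) = (b : ZMod (2 * n))) ↔ a % (2 * n) = b % (2 * n) := by
    intro a b
    rw [ZMod.natCast_eq_natCast_iff]
    rfl
  have hn0 : (n : ZMod (2 * n)) ≠ 0 := by
    intro h
    have h' : ((n : ℕ) : ZMod (2 * n)) = ((0 : ℕ) : ZMod (2 * n)) := by simpa using h
    have := (hmod n 0).mp h'
    rw [Nat.mod_eq_of_lt (by omega), Nat.zero_mod] at this
    omega
  have h10 : (1 : ZMod (2 * n)) ≠ 0 := by
    intro h
    have h' : ((1 : ℕ) : ZMod (2 * n)) = ((0 : ℕ) : ZMod (2 * n)) := by simpa using h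
    have := (hmod 1 0).mp h'
    rw [Nat.mod_eq_of_lt (by omega), Nat.zero_mod] at this
    omega
  have hn1 : (n : ZMod (2 * n)) ≠ 1 := by
    intro h
    have h' : ((n : ℕ) : ZMod (2 * n)) = ((1 : ℕ) : ZMod (2 * n)) := by simpa using h
    have := (hmod n 1).mp h'
    rw [Nat.mod_eq_of_lt (by omega), Nat.mod_eq_of_lt (by omega)] at this
    omega
  have h1n : (1 : ZMod (2 * n)) + (n : ZMod (2 * n)) ≠ 0 := by
    intro h
    have h' : ((1 + n : ℕ) : ZMod (2 * n)) = ((0 : ℕ) : ZMod (2 * n)) := by push_cast; simpa using h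
    have := (hmod (1 + n) 0).mp h'
    rw [Nat.mod_eq_of_lt (by omega), Nat.zero_mod] at this
    omega
  -- adjacency facts
  have hAdjP : ∀ i : ZMod (2 * n), (mobiusLadder n).Adj i (i + 1) := by
    intro i
    rw [mobiusLadder, SimpleGraph.fromRel_adj]
    exact ⟨fun h => h10 (left_eq_add.mp h), Or.inl (Or.inl rfl)⟩
  have hAdjS : ∀ i : ZMod (2 * n), (mobiusLadder n).Adj i (i + (n : ZMod (2 * n))) := by
    intro i
    rw [mobiusLadder, SimpleGraph.fromRel_adj]
    exact ⟨fun h => hn0 (left_eq_add.mp h), Or.inl (Or.inr rfl)⟩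
  refine ⟨{e : Sym2 (ZMod (2 * n)) | ∃ i : ZMod (2 * n), e = s(i, i + 1)}, ?_, ?_⟩
  · rintro e ⟨i, rfl⟩
    exact (mobiusLadder n).mem_edgeSet.mpr (hAdjP i)
  rintro ⟨c, hlt, hnear, hfar⟩
  have hSpoke : ∀ i : ZMod (2 * n),
      s(i, i + (n : ZMod (2 * n))) ∉ {e : Sym2 (ZMod (2 * n)) | ∃ j : ZMod (2 * n), e = s(j, j + 1)} := by
    rintro i ⟨j, hj⟩
    rw [Sym2.eq_iff] at hj
    rcases hj with ⟨h1, h2⟩ | ⟨h1, h2⟩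
    · subst h1
      exact hn1 (add_left_cancel h2)
    · subst h1
      have h3 : j + (1 + (n : ZMod (2 * n))) = j + 0 := by
        rw [← add_assoc, add_zero]; exact h2
      exact h1n (add_left_cancel h3)
  have hfarD : ∀ i : ZMod (2 * n),
      (t : ℤ) < |(c i : ℤ) - c (i + (n : ZMod (2 * n)))| :=
    fun i => hfar (hAdjS i) (hSpoke i)
  have hnearP : ∀ i : ZMod (2 * n), |(c i : ℤ) - c (i + 1)| ≤ (t : ℤ) :=
    fun i => hnear (hAdjP i) ⟨i, rfl⟩
  -- sign persistence of d i = c i - c (i + n)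
  have key : ∀ i : ZMod (2 * n),
      (0 < (c i : ℤ) - c (i + (n : ZMod (2 * n))) →
        0 < (c (i + 1) : ℤ) - c (i + (n : ZMod (2 * n)) + 1)) ∧
      ((c i : ℤ) - c (i + (n : ZMod (2 * n))) < 0 →
        (c (i + 1) : ℤ) - c (i + (n : ZMod (2 * n)) + 1) < 0) := by
    intro i
    have h1 := abs_le.mp (hnearP i)
    have h2 := abs_le.mp (hnearP (i + (n : ZMod (2 * n))))
    have h3 := lt_abs.mp (hfarD i)
    have h4' := hfarD (i + 1)
    have e : i + 1 + (n : ZMod (2 * n)) = i + (n : ZMod (2 * n)) + 1 := add_right_comm i 1 _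
    rw [e] at h4'
    have h4 := lt_abs.mp h4'
    constructor <;> intro h <;> omega
  have hpos : 0 < (c 0 : ℤ) - c ((0 : ZMod (2 * n)) + (n : ZMod (2 * n))) →
      ∀ k : ℕ, 0 < (c (k : ZMod (2 * n)) : ℤ) - c ((k : ZMod (2 * n)) + (n : ZMod (2 * n))) := by
    intro h0 k
    induction k with
    | zero => simpa using h0
    | succ k ih =>
      have hk := (key (k : ZMod (2 * n))).1 ih
      have hc : ((k + 1 : ℕ) : ZMod (2 * n)) = (k : ZMod (2 * n)) + 1 := by push_cast; ring
      rw [hc]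
      rwa [add_right_comm]
  have hneg : (c 0 : ℤ) - c ((0 : ZMod (2 * n)) + (n : ZMod (2 * n))) < 0 →
      ∀ k : ℕ, (c (k : ZMod (2 * n)) : ℤ) - c ((k : ZMod (2 * n)) + (n : ZMod (2 * n))) < 0 := by
    intro h0 k
    induction k with
    | zero => simpa using h0
    | succ k ih =>
      have hk := (key (k : ZMod (2 * n))).2 ih
      have hc : ((k + 1 : ℕ) : ZMod (2 * n)) = (k : ZMod (2 * n)) + 1 := by push_cast; ring
      rw [hc]
      rwa [add_right_comm]
  have hz : ((n : ℕ) : ZMod (2 * n)) + (n : ZMod (2 * n)) = 0 := by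
    rw [← Nat.cast_add, show n + n = 2 * n from by ring, ZMod.natCast_self]
  have hd0 := lt_abs.mp (hfarD 0)
  rw [zero_add] at hd0
  rcases (by omega : 0 < (c 0 : ℤ) - c ((n : ZMod (2 * n))) ∨ (c 0 : ℤ) - c ((n : ZMod (2 * n))) < 0) with h | h
  · have := hpos (by rwa [zero_add]) n
    rw [hz] at this
    omega
  · have := hneg (by rwa [zero_add]) n
    rw [hz] at this
    omega
end

section
/- Let n ≥ 3 and let F be the set of all n spokes v_i v_{i+n} (0 ≤ i ≤ n−1) of the Möbius ladder M_n, and let N be the set of all peripheral edges. Then for all integers r ≥ t ≥ 0 there is no (r,t)-threshold-coloring of M_n with respect to (N,F). -/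
lemma zmod_facts (n : ℕ) (hn : 3 ≤ n) :
    ((n : ZMod (2 * n)) ≠ 0 ∧ (n : ZMod (2 * n)) ≠ 1 ∧ (n : ZMod (2 * n)) + 1 ≠ 0)
      ∧ (1 : ZMod (2 * n)) ≠ 0 := by
  have h2n : 1 < 2 * n := by omega
  have hv : ∀ a : ℕ, a < 2 * n → ((a : ZMod (2 * n)).val = a) := fun a ha =>
    ZMod.val_cast_of_lt ha
  refine ⟨⟨?_, ?_, ?_⟩, ?_⟩
  · intro h
    have := congrArg ZMod.val h
    rw [hv n (by omega)] at this
    simp at this; omega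
  · intro h
    have := congrArg ZMod.val h
    have h1 : ((1 : ℕ) : ZMod (2 * n)) = 1 := by push_cast; ring
    rw [hv n (by omega), ← h1, hv 1 (by omega)] at this
    omega
  · intro h
    have h1 : (n : ZMod (2 * n)) + 1 = ((n + 1 : ℕ) : ZMod (2 * n)) := by push_cast; ring
    rw [h1] at h
    have := congrArg ZMod.val h
    rw [hv (n + 1) (by omega)] at this
    simp at this
  · intro h
    have h1 : ((1 : ℕ) : ZMod (2 * n)) = 1 := by push_cast; ring
    have := congrArg ZMod.val (h1.trans h)
    rw [hv 1 (by omega)] at this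
    simp at this

/-- For `n ≥ 3`, labeling all peripheral edges of the Möbius ladder `M_n` near (so that
exactly the spokes are far), there is no `(r,t)`-threshold-coloring for any `r ≥ t ≥ 0`. -/
theorem mobiusLadder_spokes_far_not_colorable (n : ℕ) (hn : 3 ≤ n) (r t : ℕ) (ht : t ≤ r) :
    ¬ ∃ c : ZMod (2 * n) → ℕ,
        IsThresholdColoring (mobiusLadder n)
          {e : Sym2 (ZMod (2 * n)) | ∃ i : ZMod (2 * n), e = s(i, i + 1)} r t c := by
  rintro ⟨c, -, hnear, hfar⟩
  obtain ⟨⟨hn0, hn1, hnm1⟩, h10⟩ := zmod_facts n hn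
  set N : Set (Sym2 (ZMod (2 * n))) :=
    {e : Sym2 (ZMod (2 * n)) | ∃ i : ZMod (2 * n), e = s(i, i + 1)} with hN
  -- peripheral adjacency
  have hadjP : ∀ i : ZMod (2 * n), (mobiusLadder n).Adj i (i + 1) := by
    intro i
    rw [mobiusLadder, SimpleGraph.fromRel_adj]
    exact ⟨by intro h; exact h10 (by linear_combination -h), Or.inl (Or.inl rfl)⟩
  have hadjS : ∀ i : ZMod (2 * n), (mobiusLadder n).Adj i (i + (n : ZMod (2 * n))) := by
    intro i
    rw [mobiusLadder, SimpleGraph.fromRel_adj]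
    exact ⟨by intro h; exact hn0 (by linear_combination -h), Or.inl (Or.inr rfl)⟩
  -- near bound on peripheral edges
  have hNp : ∀ i : ZMod (2 * n), |(c i : ℤ) - (c (i + 1) : ℤ)| ≤ (t : ℤ) := by
    intro i
    exact hnear (hadjP i) ⟨i, rfl⟩
  -- far bound on spokes
  have hFs : ∀ i : ZMod (2 * n), (t : ℤ) < |(c i : ℤ) - (c (i + (n : ZMod (2 * n))) : ℤ)| := by
    intro i
    refine hfar (hadjS i) ?_
    rintro ⟨j, hj⟩
    rw [Sym2.eq_iff] at hj
    rcases hj with ⟨h1, h2⟩ | ⟨h1, h2⟩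
    · subst h1; exact hn1 (by linear_combination h2)
    · rw [h1] at h2
      exact hnm1 (by linear_combination h2)
  set g : ℕ → ℤ := fun k => (c ((k : ZMod (2 * n)) + (n : ZMod (2 * n))) : ℤ) - c (k : ZMod (2 * n)) with hg
  have hA : ∀ k : ℕ, (t : ℤ) < |g k| := by
    intro k
    have := hFs (k : ZMod (2 * n))
    rw [abs_sub_comm] at this
    exact this
  have hB : ∀ k : ℕ, |g (k + 1) - g k| ≤ 2 * t := by
    intro k
    have e1 : ((k + 1 : ℕ) : ZMod (2 * n)) = (k : ZMod (2 * n)) + 1 := by push_cast; ring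
    have h1 := hNp (k : ZMod (2 * n))
    have h2 := hNp ((k : ZMod (2 * n)) + (n : ZMod (2 * n)))
    have e2 : (k : ZMod (2 * n)) + (n : ZMod (2 * n)) + 1
        = (k : ZMod (2 * n)) + 1 + (n : ZMod (2 * n)) := by ring
    rw [e2] at h2
    rw [abs_le] at h1 h2
    simp only [hg, e1]
    rw [abs_le]
    constructor <;> linarith [h1.1, h1.2, h2.1, h2.2]
  have hpos : ∀ k : ℕ, (t : ℤ) < g 0 → (t : ℤ) < g k := by
    intro k hp
    induction k with
    | zero => exact hp
    | succ k ih =>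
      have h1 := hA (k + 1)
      have h2 := hB k
      rw [lt_abs] at h1
      rw [abs_sub_le_iff] at h2
      have ht0 : (0 : ℤ) ≤ t := Int.natCast_nonneg t
      rcases h1 with h | h
      · exact h
      · linarith
  have hneg : ∀ k : ℕ, g 0 < -(t : ℤ) → g k < -(t : ℤ) := by
    intro k hp
    induction k with
    | zero => exact hp
    | succ k ih =>
      have h1 := hA (k + 1)
      have h2 := hB k
      rw [lt_abs] at h1
      rw [abs_sub_le_iff] at h2
      have ht0 : (0 : ℤ) ≤ t := Int.natCast_nonneg t
      rcases h1 with h | h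
      · linarith
      · linarith
  have hflip : g n = -g 0 := by
    have e0 : ((0 : ℕ) : ZMod (2 * n)) = 0 := by push_cast; ring
    have e1 : (n : ZMod (2 * n)) + (n : ZMod (2 * n)) = 0 := by
      have : ((2 * n : ℕ) : ZMod (2 * n)) = 0 := ZMod.natCast_self _
      push_cast at this
      linear_combination this
    simp only [hg, e0, e1, zero_add]
    ring
  have ht0 : (0 : ℤ) ≤ t := Int.natCast_nonneg t
  have h0 := hA 0
  rw [lt_abs] at h0
  rcases h0 with h | h
  · have := hpos n h
    rw [hflip] at this
    linarith
  · have := hneg n (by linarith)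
    rw [hflip] at this
    linarith
end

section
/- There is no finite set 𝔉 of finite simple graphs such that a finite simple graph is total threshold colorable if and only if it contains no subgraph isomorphic to a member of 𝔉. -/
/-- A graph is total threshold colorable if there are integers `r ≥ t ≥ 0` such that for
every subset `N` of its edge set there is an `(r,t)`-threshold-coloring with respect to
the near-far-labeling `(N, E \ N)`. -/
def TotalThresholdColorable {V : Type*} (G : SimpleGraph V) : Prop :=
  ∃ r t : ℕ, t ≤ r ∧ ∀ N ⊆ G.edgeSet, ∃ c : V → ℕ, IsThresholdColoring G N r t c

open SimpleGraph Function

/-!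
For odd `m ≥ 3` the wheel `cone (cycleGraph m)` is not total threshold colorable: with near spokes
and far rim edges, the rim colors would have to alternate between the two sides of the hub's color
around an odd cycle. Deleting a rim vertex, however, leaves a graph that embeds into the fan
`cone (hasse ℕ)`, and a cone over a graph all of whose signings are balanced is colorable with
`r = 9`, `t = 2`. So every odd wheel contains a forbidden graph; once the wheel has more rim
vertices than each forbidden graph has vertices, that graph misses a rim vertex and is colorable
itself.
-/

theorem TotalThresholdColorable.of_hom {V W : Type*} {H : SimpleGraph V} {G : SimpleGraph W}
    (f : H →g G) (hf : Injective f) (h : TotalThresholdColorable G) :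
    TotalThresholdColorable H := by
  obtain ⟨r, t, htr, hc⟩ := h
  refine ⟨r, t, htr, fun N hN => ?_⟩
  have hsub : Sym2.map f '' N ⊆ G.edgeSet := by
    rintro e ⟨e', he', rfl⟩
    exact f.map_mem_edgeSet (hN he')
  obtain ⟨c, hcr, hnear, hfar⟩ := hc (Sym2.map f '' N) hsub
  refine ⟨c ∘ f, fun v => hcr _, fun u v huv hmem => ?_, fun u v huv hmem => ?_⟩
  · exact hnear (f.map_adj huv) ⟨s(u, v), hmem, Sym2.map_mk f u v⟩
  · refine hfar (f.map_adj huv) ?_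
    rintro ⟨e, he, hfe⟩
    rw [← Sym2.map_mk, (Sym2.map.injective hf).eq_iff] at hfe
    exact hmem (hfe ▸ he)

theorem isThresholdColoring_of_forall_adj {V : Type*} {G : SimpleGraph V} {N : Set (Sym2 V)}
    {r t : ℕ} {c : V → ℕ} (hr : ∀ v, c v < r)
    (hadj : ∀ ⦃u v⦄, G.Adj u v → (s(u, v) ∈ N ↔ |(c u : ℤ) - (c v : ℤ)| ≤ (t : ℤ))) :
    IsThresholdColoring G N r t c :=
  ⟨hr, fun _ _ h hN => (hadj h).1 hN, fun _ _ h hN => not_le.1 fun ht => hN ((hadj h).2 ht)⟩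

def cone {V : Type*} (G : SimpleGraph V) : SimpleGraph (Option V) where
  Adj
    | none, none => False
    | none, some _ | some _, none => True
    | some u, some v => G.Adj u v
  symm := ⟨by
    rintro (_ | u) (_ | v) h
    exacts [h, trivial, trivial, h.symm]⟩
  loopless := ⟨by
    rintro (_ | u) h
    exacts [h, G.irrefl h]⟩

section Cone

variable {V : Type*} {G : SimpleGraph V}

@[simp] theorem cone_adj_some_some {u v : V} : (cone G).Adj (some u) (some v) ↔ G.Adj u v :=
  Iff.rfl

@[simp] theorem not_cone_adj_none_none : ¬ (cone G).Adj none none := id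

theorem colorable_two_of_totalThresholdColorable_cone (h : TotalThresholdColorable (cone G)) :
    G.Colorable 2 := by
  obtain ⟨r, t, -, hc⟩ := h
  obtain ⟨c, -, hnear, hfar⟩ := hc ((cone G).edgeSet ∩ {e | none ∈ e}) Set.inter_subset_left
  have hspoke (v : V) : |(c none : ℤ) - c (some v)| ≤ t :=
    have hadj : (cone G).Adj none (some v) := trivial
    hnear hadj ⟨hadj, Sym2.mem_mk_left _ _⟩
  -- spokes are near and rim edges far, so adjacent vertices lie on opposite sides of the hub
  refine (Coloring.mk (fun v => decide (c none ≤ c (some v))) fun {u v} huv hside => ?_).colorable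
  have hrim : (t : ℤ) < |(c (some u) : ℤ) - c (some v)| :=
    hfar (cone_adj_some_some.2 huv) (by simp)
  have hu := abs_le.1 (hspoke u)
  have hv := abs_le.1 (hspoke v)
  simp only [decide_eq_decide] at hside
  rcases lt_abs.1 hrim with h | h <;> omega

/-- In signed-graph terms: every signing of `G`, with `N` the positive edges, is balanced.
This holds exactly for forests. -/
def AllSigningsBalanced (G : SimpleGraph V) : Prop :=
  ∀ N : Set (Sym2 V), ∃ side : V → Bool, ∀ ⦃u v⦄, G.Adj u v → (side u = side v ↔ s(u, v) ∈ N)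

theorem totalThresholdColorable_cone (hG : AllSigningsBalanced G) :
    TotalThresholdColorable (cone G) := by
  classical
  refine ⟨9, 2, by norm_num, fun N _ => ?_⟩
  obtain ⟨side, hside⟩ := hG {e | Sym2.map some e ∈ N}
  -- The hub gets 5; the other vertices get 2 or 3 on one side and 7 or 8 on the other,
  -- the value next to 5 when the spoke is near.
  let c : Option V → ℕ
    | none => 5
    | some v =>
      if side v then (if s(none, some v) ∈ N then 7 else 8)
      else (if s(none, some v) ∈ N then 3 else 2)
  have hspoke (v : V) : s(none, some v) ∈ N ↔ |(c none : ℤ) - c (some v)| ≤ 2 := by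
    by_cases hv : s(none, some v) ∈ N <;> cases hs : side v <;> simp [c, hv, hs]
  refine ⟨c, isThresholdColoring_of_forall_adj (fun v => ?_) ?_⟩
  · rcases v with _ | v
    · simp [c]
    · simp only [c]; split_ifs <;> norm_num
  rintro (_ | u) (_ | v) huv
  · exact absurd huv not_cone_adj_none_none
  · exact hspoke v
  · rw [Sym2.eq_swap, abs_sub_comm]
    exact hspoke u
  · have huv' := hside huv
    simp only [Set.mem_ofPred_eq, Sym2.map_mk] at huv'
    rw [← huv']
    by_cases hu : s(none, some u) ∈ N <;> by_cases hv : s(none, some v) ∈ N <;>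
      cases hsu : side u <;> cases hsv : side v <;> simp [c, hu, hv, hsu, hsv]

end Cone

theorem not_totalThresholdColorable_cone_cycleGraph {n : ℕ} (hn : 2 ≤ n) (hodd : Odd n) :
    ¬ TotalThresholdColorable (cone (cycleGraph n)) := fun h => by
  have h3 := chromaticNumber_cycleGraph_of_odd n hn hodd
  have h2 := chromaticNumber_le_iff_colorable.2 (colorable_two_of_totalThresholdColorable_cone h)
  rw [h3] at h2
  exact absurd h2 (by norm_num)

open Classical in
noncomputable def pathSide (N : Set (Sym2 ℕ)) : ℕ → Bool
  | 0 => false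
  | k + 1 => if s(k, k + 1) ∈ N then pathSide N k else !pathSide N k

theorem allSigningsBalanced_hasse_nat : AllSigningsBalanced (hasse ℕ) := by
  intro N
  refine ⟨pathSide N, ?_⟩
  have hstep (k : ℕ) : pathSide N k = pathSide N (k + 1) ↔ s(k, k + 1) ∈ N := by
    by_cases hk : s(k, k + 1) ∈ N <;> simp [pathSide, hk]
  rintro u v (huv | hvu)
  · obtain rfl := Order.covBy_iff_add_one_eq.1 huv
    exact hstep u
  · obtain rfl := Order.covBy_iff_add_one_eq.1 hvu
    rw [eq_comm, Sym2.eq_swap]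
    exact hstep v

theorem val_sub_eq_val_sub_add_one {n : ℕ} [NeZero n] {x y p : Fin n} (hxy : (y - x).val = 1)
    (hy : y ≠ p) : (y - p).val = (x - p).val + 1 := by
  have hsum : y - p = (x - p) + (y - x) := by abel
  have hlt : (x - p).val + 1 < n := by
    by_contra hge
    have : (y - p).val = 0 := by
      rw [hsum, Fin.val_add, hxy, show (x - p).val + 1 = n by have := (x - p).isLt; omega,
        Nat.mod_self]
    exact hy (sub_eq_zero.1 (Fin.ext this))
  rw [hsum, Fin.val_add, hxy, Nat.mod_eq_of_lt hlt]

theorem hasse_adj_val_sub_of_cycleGraph_adj {n : ℕ} [NeZero n] {x y p : Fin n}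
    (hxy : (cycleGraph n).Adj x y) (hx : x ≠ p) (hy : y ≠ p) :
    (hasse ℕ).Adj (x - p).val (y - p).val := by
  rcases cycleGraph_adj'.1 hxy with h | h
  · exact Or.inr (Order.covBy_iff_add_one_eq.2 (val_sub_eq_val_sub_add_one h hx).symm)
  · exact Or.inl (Order.covBy_iff_add_one_eq.2 (val_sub_eq_val_sub_add_one h hy).symm)

theorem cone_adj_map_val_sub {n : ℕ} [NeZero n] {u v : Option (Fin n)} (p : Fin n)
    (huv : (cone (cycleGraph n)).Adj u v) (hu : u ≠ some p) (hv : v ≠ some p) :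
    (cone (hasse ℕ)).Adj (u.map fun x => (x - p).val) (v.map fun x => (x - p).val) := by
  rcases u with _ | u <;> rcases v with _ | v
  · exact huv
  · trivial
  · trivial
  · exact hasse_adj_val_sub_of_cycleGraph_adj huv (by simpa using hu) (by simpa using hv)

theorem exists_forall_ne_some_of_card_lt {α β : Type*} [Finite α] (f : α → Option β)
    (h : Nat.card α < Nat.card β) : ∃ b, ∀ a, f a ≠ some b := by
  by_contra! hsurj
  choose g hg using hsurj
  have hinj : Injective g := fun b b' hb => Option.some_injective _ (by rw [← hg, ← hg, hb])
  exact (Nat.card_le_card_of_injective g hinj).not_gt h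

/-- There is no finite set `𝔉` of finite simple graphs such that a finite simple graph is
total threshold colorable if and only if it contains no subgraph isomorphic to a member
of `𝔉` (subgraph containment being expressed by an injective graph homomorphism). -/
theorem no_finite_forbidden_subgraph_characterization :
    ¬ ∃ (k : ℕ) (Vf : Fin k → Type) (Hf : (i : Fin k) → SimpleGraph (Vf i)),
        (∀ i, Finite (Vf i)) ∧
        ∀ (W : Type) (_ : Finite W) (G : SimpleGraph W),
          (TotalThresholdColorable G ↔
            ∀ i : Fin k, ¬ ∃ f : Hf i →g G, Function.Injective f) := by
  rintro ⟨k, Vf, Hf, hfin, hchar⟩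
  set B := Finset.univ.sup fun i => Nat.card (Vf i)
  obtain ⟨i, f, hf⟩ : ∃ i, ∃ f : Hf i →g cone (cycleGraph (2 * B + 3)), Injective f := by
    by_contra! h
    refine not_totalThresholdColorable_cone_cycleGraph (n := 2 * B + 3) (by omega)
      ⟨B + 1, by ring⟩ ?_
    exact (hchar _ inferInstance _).2 fun i ⟨f, hf⟩ => h i f hf
  have := hfin i
  obtain ⟨p, hp⟩ := exists_forall_ne_some_of_card_lt f (by
    have : Nat.card (Vf i) ≤ B := Finset.le_sup (f := fun i => Nat.card (Vf i)) (Finset.mem_univ i)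
    rw [Nat.card_fin]
    omega)
  let g : Hf i →g cone (hasse ℕ) :=
    ⟨fun a => (f a).map fun x => (x - p).val,
      fun hab => cone_adj_map_val_sub p (f.map_adj hab) (hp _) (hp _)⟩
  have hg : Injective g :=
    (Option.map_injective (Fin.val_injective.comp (sub_left_injective (b := p)))).comp hf
  refine (hchar _ (hfin i) _).1 ?_ i ⟨Hom.id, injective_id⟩
  exact (totalThresholdColorable_cone allSigningsBalanced_hasse_nat).of_hom g hg
end

section
/- Suppose c is an (r,t)-threshold-coloring of a graph G with respect to the near-far-labeling (N,F). If w, x, y, z, w is a cycle of length 4 in G with wx ∈ F, yz ∈ F, xy ∈ N, and zw ∈ N, then c(w) > c(x) implies c(z) > c(y). -/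
/-- If `c` is an `(r,t)`-threshold-coloring of `G` with respect to `(N, E \ N)` and
`w x y z w` is a cycle of length 4 with `wx, yz` far edges and `xy, zw` near edges,
then `c w > c x` implies `c z > c y`. -/
theorem threshold_coloring_four_cycle {V : Type*} (G : SimpleGraph V)
    (N : Set (Sym2 V)) (hN : N ⊆ G.edgeSet) (r t : ℕ) (htr : t ≤ r)
    (c : V → ℕ) (hc : IsThresholdColoring G N r t c)
    (w x y z : V)
    (hwx : G.Adj w x) (hxy : G.Adj x y) (hyz : G.Adj y z) (hzw : G.Adj z w)
    (hwy : w ≠ y) (hxz : x ≠ z)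
    (hFwx : s(w, x) ∉ N) (hFyz : s(y, z) ∉ N)
    (hNxy : s(x, y) ∈ N) (hNzw : s(z, w) ∈ N)
    (h : c x < c w) : c y < c z := by
  obtain ⟨-, hnear, hfar⟩ := hc
  have h1 := hfar hwx hFwx
  have h2 := hfar hyz hFyz
  have h3 := hnear hxy hNxy
  have h4 := hnear hzw hNzw
  rw [abs_le] at h3 h4
  rcases abs_cases ((c w : ℤ) - c x) with ⟨e1, _⟩ | ⟨e1, _⟩ <;>
    rcases abs_cases ((c y : ℤ) - c z) with ⟨e2, _⟩ | ⟨e2, _⟩ <;>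
      rw [e1] at h1 <;> rw [e2] at h2 <;> omega
end

section
/- The complete graph K_4 on four vertices is not total threshold colorable; more precisely, if w, x, y, z are its four vertices and F = {wx, yz} with N the remaining four edges, then for all integers r ≥ t ≥ 0 there is no (r,t)-threshold-coloring of K_4 with respect to (N,F). -/
/-- `K_4` is not total threshold colorable: if `w, x, y, z` are its four vertices and
`F = {wx, yz}` with `N` the remaining four edges, then for all `r ≥ t ≥ 0` there is no
`(r,t)`-threshold-coloring of `K_4` with respect to `(N, F)`. -/
theorem k4_not_total_threshold_colorable (w x y z : Fin 4)
    (hwx : w ≠ x) (hwy : w ≠ y) (hwz : w ≠ z) (hxy : x ≠ y) (hxz : x ≠ z) (hyz : y ≠ z)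
    (r t : ℕ) (htr : t ≤ r) :
    ¬ ∃ c : Fin 4 → ℕ,
        IsThresholdColoring (⊤ : SimpleGraph (Fin 4))
          ((⊤ : SimpleGraph (Fin 4)).edgeSet \ {s(w, x), s(y, z)}) r t c := by
  rintro ⟨c, hr, hN, hF⟩
  have adj : ∀ {a b : Fin 4}, a ≠ b → (⊤ : SimpleGraph (Fin 4)).Adj a b := fun h => h
  have hFwx := hF (adj hwx) (by simp)
  have hFyz := hF (adj hyz) (by simp)
  have mem : ∀ {a b : Fin 4}, a ≠ b → s(a, b) ≠ s(w, x) → s(a, b) ≠ s(y, z) →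
      s(a, b) ∈ ((⊤ : SimpleGraph (Fin 4)).edgeSet \ {s(w, x), s(y, z)}) := by
    intro a b h1 h2 h3
    exact ⟨by simpa using h1, by simp [h2, h3]⟩
  have e1 := hN (adj hwy) (mem hwy (by simp [Sym2.eq, Sym2.rel_iff']; tauto)
    (by simp [Sym2.eq, Sym2.rel_iff']; tauto))
  have e2 := hN (adj hwz) (mem hwz (by simp [Sym2.eq, Sym2.rel_iff']; tauto)
    (by simp [Sym2.eq, Sym2.rel_iff']; tauto))
  have e3 := hN (adj hxy) (mem hxy (by simp [Sym2.eq, Sym2.rel_iff']; tauto)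
    (by simp [Sym2.eq, Sym2.rel_iff']; tauto))
  have e4 := hN (adj hxz) (mem hxz (by simp [Sym2.eq, Sym2.rel_iff']; tauto)
    (by simp [Sym2.eq, Sym2.rel_iff']; tauto))
  rw [abs_sub_le_iff] at e1 e2 e3 e4
  rcases lt_abs.mp hFwx with h1 | h1 <;> rcases lt_abs.mp hFyz with h2 | h2 <;> omega
end

section
/- Let G be a finite simple graph with near-far-labeling (N,F). Suppose there exist a partition {A,B} of the vertex set of G and a set M ⊆ E(G) such that: (i) every edge of the induced subgraph G[A] belongs to N; (ii) every cycle of the induced subgraph G[B] contains an even number of edges from F; (iii) M is an induced matching (the vertex sets of any two distinct edges of M are at distance at least 2) and every edge of M joins a vertex of A to a vertex of B; and (iv) for every pair of edges ab, a'b ∈ E(G) \ M with a, a' ∈ A and b ∈ B, either both ab, a'b ∈ N or both ab, a'b ∈ F. Then G admits a (13,4)-threshold-coloring with respect to (N,F); moreover, if M = ∅ then G admits a (5,1)-threshold-coloring with respect to (N,F). -/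
theorem List.prod_map_ite_one_neg_one {α : Type*} [DecidableEq α] {l : List α} (hl : l.Nodup)
    (N : Set α) [DecidablePred (· ∈ N)] :
    (l.map fun e => if e ∈ N then (1 : ℤˣ) else -1).prod = (-1) ^ {e | e ∈ l ∧ e ∉ N}.ncard := by
  have hfar : {e | e ∈ l ∧ e ∉ N} = ↑(l.filter (· ∉ N)).toFinset := by
    ext e
    simp
  rw [List.prod_map_ite, hfar, Set.ncard_coe_finset, List.toFinset_card_of_nodup (hl.filter _)]
  simp

theorem Int.abs_units_mul (u : ℤˣ) (x : ℤ) : |u * x| = |x| := by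
  rw [abs_mul, Int.isUnit_iff_abs_eq.mp u.isUnit, one_mul]

theorem Int.units_eq_iff_abs_mul_sub_mul_le {s s' : ℤˣ} {d d' lo hi t : ℤ}
    (hd : d ∈ Set.Icc lo hi) (hd' : d' ∈ Set.Icc lo hi) (hspread : hi - lo ≤ t)
    (hgap : t < 2 * lo) : s = s' ↔ |s * d - s' * d'| ≤ t := by
  obtain ⟨hd₁, hd₂⟩ := hd
  obtain ⟨hd₁', hd₂'⟩ := hd'
  rcases Int.units_eq_one_or s with rfl | rfl <;> rcases Int.units_eq_one_or s' with rfl | rfl <;>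
    simp [abs_le] <;> omega

namespace SimpleGraph

variable {V : Type*} {G : SimpleGraph V} {f : Sym2 V → ℤˣ}

namespace Walk

theorem prod_map_edges_cons_eq_one_of_isPath
    (hcyc : ∀ v (c : G.Walk v v), c.IsCycle → (c.edges.map f).prod = 1)
    {u x : V} (h : G.Adj u x) {q : G.Walk x u} (hq : q.IsPath) :
    ((cons h q).edges.map f).prod = 1 := by
  by_cases he : s(u, x) ∈ q.edges
  · rw [hq.eq_adj_toWalk_of_mem_edges (Sym2.eq_swap ▸ he)]
    simp [Sym2.eq_swap, Int.units_mul_self]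
  · exact hcyc u _ ((cons_isCycle_iff q h).mpr ⟨hq, he⟩)

theorem prod_map_edges_bypass [DecidableEq V]
    (hcyc : ∀ v (c : G.Walk v v), c.IsCycle → (c.edges.map f).prod = 1) {u v : V}
    (p : G.Walk u v) : (p.bypass.edges.map f).prod = (p.edges.map f).prod := by
  induction p with
  | nil => rfl
  | @cons u x v h p ih =>
    rw [bypass]
    split_ifs with hs
    · have hclosed := prod_map_edges_cons_eq_one_of_isPath hcyc h (p.bypass_isPath.takeUntil hs)
      have hsplit := congrArg (fun w => (w.edges.map f).prod) (p.bypass.take_spec hs)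
      simp only [edges_append, List.map_append, List.prod_append] at hsplit
      simp only [edges_cons, List.map_cons, List.prod_cons] at hclosed ⊢
      rw [← ih, ← hsplit, ← mul_assoc, hclosed, one_mul]
    · simp [ih]

theorem prod_map_edges_eq_one_of_forall_isCycle
    (hcyc : ∀ v (c : G.Walk v v), c.IsCycle → (c.edges.map f).prod = 1) {v : V}
    (p : G.Walk v v) : (p.edges.map f).prod = 1 := by
  classical
  rw [← prod_map_edges_bypass hcyc, edges_eq_nil.mpr (isPath_iff_nil.mp p.bypass_isPath)]
  rfl

end Walk

open Walk in
/-- Harary's balance theorem. -/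
theorem exists_switching_of_forall_isCycle
    (hcyc : ∀ v (c : G.Walk v v), c.IsCycle → (c.edges.map f).prod = 1) :
    ∃ σ : V → ℤˣ, ∀ ⦃u v⦄, G.Adj u v → σ u * σ v = f s(u, v) := by
  have hroot (v : V) : G.Reachable (Quot.out (G.connectedComponentMk v)) v :=
    ConnectedComponent.exact (Quot.out_eq _)
  refine ⟨fun v => ((hroot v).some.edges.map f).prod, fun u v huv => ?_⟩
  have hr : Quot.out (G.connectedComponentMk u) = Quot.out (G.connectedComponentMk v) := by
    rw [ConnectedComponent.connectedComponentMk_eq_of_adj huv]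
  have hclosed := prod_map_edges_eq_one_of_forall_isCycle hcyc
    ((((hroot u).some.concat huv).copy hr rfl).append (hroot v).some.reverse)
  simp only [edges_append, edges_copy, edges_concat, edges_reverse, List.map_append,
    List.map_reverse, List.prod_append, List.prod_reverse, List.concat_eq_append,
    List.map_cons, List.map_nil, List.prod_cons, List.prod_nil, mul_one] at hclosed
  rw [← Int.units_inv_eq_self (f _), eq_inv_iff_mul_eq_one, ← hclosed]
  exact mul_right_comm _ _ _

end SimpleGraph

section ThresholdColoring

open SimpleGraph

variable {V : Type*} {G : SimpleGraph V} {N : Set (Sym2 V)}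

theorem exists_sign_of_even_far_cycles (A : Set V)
    (hB : ∀ (v : V) (p : G.Walk v v), p.IsCycle → (∀ x ∈ p.support, x ∉ A) →
      Even {e : Sym2 V | e ∈ p.edges ∧ e ∉ N}.ncard) :
    ∃ σ : V → ℤˣ, ∀ ⦃u v⦄, G.Adj u v → u ∉ A → v ∉ A → (σ u = σ v ↔ s(u, v) ∈ N) := by
  classical
  let φ := (Embedding.induce Aᶜ : G.induce Aᶜ ↪g G)
  have hcyc (v) (c : (G.induce Aᶜ).Walk v v) (hc : c.IsCycle) :
      (c.edges.map fun e => if e.map (↑) ∈ N then (1 : ℤˣ) else -1).prod = 1 := by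
    have hφc : (c.map φ.toHom).IsCycle := (Walk.isCycle_map_iff_of_injective φ.injective).mpr hc
    have hout : ∀ x ∈ (c.map φ.toHom).support, x ∉ A := by
      simp only [Walk.support_map, List.mem_map]
      rintro _ ⟨x, -, rfl⟩
      exact x.2
    have := List.prod_map_ite_one_neg_one hφc.edges_nodup N
    rw [(hB _ _ hφc hout).neg_one_pow, Walk.edges_map, List.map_map] at this
    exact this
  obtain ⟨σ, hσ⟩ := exists_switching_of_forall_isCycle hcyc
  refine ⟨fun v => if h : v ∈ A then 1 else σ ⟨v, h⟩, fun u v huv hu hv => ?_⟩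
  have hsign : σ ⟨u, hu⟩ * σ ⟨v, hv⟩ = if s(u, v) ∈ N then 1 else -1 := hσ (u := ⟨u, hu⟩) huv
  simp only [hu, hv, dite_false]
  rw [← Int.units_inv_eq_self (σ ⟨v, hv⟩), ← mul_eq_one_iff_eq_inv, hsign]
  split_ifs with hN <;> simp [hN]

theorem isThresholdColoring_toNat {m t : ℕ} {κ : V → ℤ} (hκ : ∀ v, |κ v| ≤ m)
    (hadj : ∀ ⦃u v⦄, G.Adj u v → (s(u, v) ∈ N ↔ |κ u - κ v| ≤ t)) :
    IsThresholdColoring G N (2 * m + 1) t fun v => (κ v + m).toNat := by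
  have hκ' (v : V) := abs_le.mp (hκ v)
  have hcast (v : V) : (((κ v + m).toNat : ℕ) : ℤ) = κ v + m :=
    Int.toNat_of_nonneg (by linarith [hκ' v])
  refine ⟨fun v => by have := hκ' v; dsimp only; omega, fun u v huv hN => ?_, fun u v huv hN => ?_⟩
  · rw [hcast, hcast, add_sub_add_right_eq_sub]
    exact (hadj huv).mp hN
  · rw [hcast, hcast, add_sub_add_right_eq_sub]
    exact not_le.mp (mt (hadj huv).mpr hN)

theorem near_iff_abs_sub_le_of_cases (A : Set V) {κ : V → ℤ} {t : ℤ}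
    (hAA : ∀ ⦃u v⦄, G.Adj u v → u ∈ A → v ∈ A → (s(u, v) ∈ N ↔ |κ u - κ v| ≤ t))
    (hAB : ∀ ⦃a b⦄, G.Adj a b → a ∈ A → b ∉ A → (s(a, b) ∈ N ↔ |κ a - κ b| ≤ t))
    (hBB : ∀ ⦃u v⦄, G.Adj u v → u ∉ A → v ∉ A → (s(u, v) ∈ N ↔ |κ u - κ v| ≤ t)) :
    ∀ ⦃u v⦄, G.Adj u v → (s(u, v) ∈ N ↔ |κ u - κ v| ≤ t) := by
  intro u v huv
  by_cases hu : u ∈ A <;> by_cases hv : v ∈ A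
  · exact hAA huv hu hv
  · exact hAB huv hu hv
  · rw [Sym2.eq_swap, abs_sub_comm]
    exact hAB huv.symm hv hu
  · exact hBB huv hu hv

end ThresholdColoring

namespace Zigzag

variable {V : Type*} (G : SimpleGraph V) (N M : Set (Sym2 V)) (A : Set V)

def IsInducedMatching : Prop :=
  ∀ e ∈ M, ∀ f ∈ M, e ≠ f → ∀ u ∈ e, ∀ v ∈ f, u ≠ v ∧ ¬ G.Adj u v

def HasNearEdgeFromA (b : V) : Prop :=
  ∃ a ∈ A, G.Adj a b ∧ s(a, b) ∉ M ∧ s(a, b) ∈ N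

def HasUniformCrossLabels : Prop :=
  ∀ ⦃a a' b⦄, a ∈ A → a' ∈ A → b ∉ A → G.Adj a b → G.Adj a' b → s(a, b) ∉ M → s(a', b) ∉ M →
    (s(a, b) ∈ N ↔ s(a', b) ∈ N)

open Classical in
noncomputable def matchShift (b : V) : ℤ :=
  if HasNearEdgeFromA G N M A b then (if ∃ a, s(a, b) ∈ M ∧ s(a, b) ∉ N then 1 else 0)
  else if ∃ a, s(a, b) ∈ M ∧ s(a, b) ∈ N then -1 else 0

open Classical in
noncomputable def depth (p q : ℤ) (b : V) : ℤ :=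
  (if HasNearEdgeFromA G N M A b then p else q) + matchShift G N M A b

open Classical in
noncomputable def zigzagColoring (σ : V → ℤˣ) (p q : ℤ) (v : V) : ℤ :=
  if v ∈ A then
    if h : ∃ b, s(v, b) ∈ M then -(σ h.choose * matchShift G N M A h.choose) else 0
  else σ v * depth G N M A p q v

variable {G N M A}

theorem IsInducedMatching.eq_of_mem (hM : IsInducedMatching G M) {u v w : V}
    (hv : s(u, v) ∈ M) (hw : s(u, w) ∈ M) : v = w := by
  by_contra hne
  exact (hM _ hv _ hw (mt Sym2.congr_right.mp hne) u (Sym2.mem_mk_left u v) u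
    (Sym2.mem_mk_left u w)).1 rfl

theorem IsInducedMatching.mem_of_adj (hM : IsInducedMatching G M) {a b x y : V}
    (ha : s(a, x) ∈ M) (hb : s(y, b) ∈ M) (hab : G.Adj a b) : s(a, b) ∈ M := by
  by_contra hnot
  have hne : s(a, x) ≠ s(y, b) := by
    intro heq
    rcases Sym2.eq_iff.mp heq with ⟨rfl, rfl⟩ | ⟨rfl, -⟩
    · exact hnot ha
    · exact hab.ne rfl
  exact (hM _ ha _ hb hne a (Sym2.mem_mk_left _ _) b (Sym2.mem_mk_right _ _)).2 hab

theorem near_iff_hasNearEdgeFromA (hiv : HasUniformCrossLabels G N M A)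
    {a b : V} (ha : a ∈ A) (hb : b ∉ A) (hab : G.Adj a b) (habM : s(a, b) ∉ M) :
    s(a, b) ∈ N ↔ HasNearEdgeFromA G N M A b :=
  ⟨fun hN => ⟨a, ha, hab, habM, hN⟩,
    fun ⟨_, ha', ha'b, ha'bM, ha'bN⟩ => (hiv ha ha' hb hab ha'b habM ha'bM).mpr ha'bN⟩

theorem matchShift_of_forall_notMem {b : V} (hb : ∀ a, s(a, b) ∉ M) :
    matchShift G N M A b = 0 := by
  simp [matchShift, hb]

open Classical in
theorem matchShift_of_mem (hM : IsInducedMatching G M) {a b : V} (hab : s(a, b) ∈ M) :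
    matchShift G N M A b =
      if HasNearEdgeFromA G N M A b then (if s(a, b) ∈ N then 0 else 1)
      else if s(a, b) ∈ N then -1 else 0 := by
  have hunique (P : Sym2 V → Prop) : (∃ a', s(a', b) ∈ M ∧ P s(a', b)) ↔ P s(a, b) := by
    refine ⟨fun ⟨a', ha'b, hP⟩ => ?_, fun hP => ⟨a, hab, hP⟩⟩
    obtain rfl : a' = a := hM.eq_of_mem (u := b) (by rwa [Sym2.eq_swap]) (by rwa [Sym2.eq_swap])
    exact hP
  have hfar : (∃ a', s(a', b) ∈ M ∧ s(a', b) ∉ N) ↔ s(a, b) ∉ N := hunique (· ∉ N)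
  have hnear : (∃ a', s(a', b) ∈ M ∧ s(a', b) ∈ N) ↔ s(a, b) ∈ N := hunique (· ∈ N)
  simp only [matchShift, hfar, hnear]
  split_ifs <;> rfl

open Classical in
theorem depth_mem_Icc (p q : ℤ) (b : V) :
    depth G N M A p q b ∈
      if HasNearEdgeFromA G N M A b then Set.Icc p (p + 1) else Set.Icc (q - 1) q := by
  unfold depth matchShift
  split_ifs <;> simp

theorem abs_matchShift_le_one (b : V) : |matchShift G N M A b| ≤ 1 := by
  unfold matchShift
  split_ifs <;> simp

theorem depth_mem_Icc_self {p q : ℤ} (hpq : p + 1 ≤ q) (b : V) :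
    depth G N M A p q b ∈ Set.Icc p q := by
  have := depth_mem_Icc (G := G) (N := N) (M := M) (A := A) p q b
  split_ifs at this <;> exact ⟨by linarith [this.1], by linarith [this.2]⟩

variable {σ : V → ℤˣ} {p q : ℤ}

theorem zigzagColoring_of_notMem {v : V} (hv : v ∉ A) :
    zigzagColoring G N M A σ p q v = σ v * depth G N M A p q v := by
  simp [zigzagColoring, hv]

theorem zigzagColoring_of_unmatched {a : V} (ha : a ∈ A) (h : ∀ b, s(a, b) ∉ M) :
    zigzagColoring G N M A σ p q a = 0 := by
  simp [zigzagColoring, ha, h]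

theorem zigzagColoring_of_matched (hM : IsInducedMatching G M) {a b : V} (ha : a ∈ A)
    (hab : s(a, b) ∈ M) :
    zigzagColoring G N M A σ p q a = -(σ b * matchShift G N M A b) := by
  have h : ∃ b, s(a, b) ∈ M := ⟨b, hab⟩
  rw [zigzagColoring, if_pos ha, dif_pos h, hM.eq_of_mem h.choose_spec hab]

theorem abs_zigzagColoring_le_one {a : V} (ha : a ∈ A) : |zigzagColoring G N M A σ p q a| ≤ 1 := by
  unfold zigzagColoring
  split_ifs
  · rw [abs_neg, Int.abs_units_mul]
    exact abs_matchShift_le_one _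
  · simp

theorem abs_zigzagColoring_of_notMem (hp : 0 ≤ p) (hpq : p + 1 ≤ q) {b : V} (hb : b ∉ A) :
    |zigzagColoring G N M A σ p q b| = depth G N M A p q b := by
  rw [zigzagColoring_of_notMem hb, Int.abs_units_mul, abs_of_nonneg]
  exact hp.trans (depth_mem_Icc_self hpq b).1

theorem abs_zigzagColoring_le (hp : 0 ≤ p) (hpq : p + 1 ≤ q) (v : V) :
    |zigzagColoring G N M A σ p q v| ≤ q := by
  by_cases hv : v ∈ A
  · exact (abs_zigzagColoring_le_one hv).trans (by linarith)
  · rw [abs_zigzagColoring_of_notMem hp hpq hv]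
    exact (depth_mem_Icc_self hpq v).2

theorem near_iff_of_notMem_of_notMem {t : ℤ} (hpq : p + 1 ≤ q) (hpt : t < 2 * p) (hqt : q - p ≤ t)
    (hσ : ∀ ⦃u v⦄, G.Adj u v → u ∉ A → v ∉ A → (σ u = σ v ↔ s(u, v) ∈ N))
    {u v : V} (huv : G.Adj u v) (hu : u ∉ A) (hv : v ∉ A) :
    s(u, v) ∈ N ↔ |zigzagColoring G N M A σ p q u - zigzagColoring G N M A σ p q v| ≤ t := by
  rw [← hσ huv hu hv, zigzagColoring_of_notMem hu, zigzagColoring_of_notMem hv]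
  exact Int.units_eq_iff_abs_mul_sub_mul_le (depth_mem_Icc_self hpq u) (depth_mem_Icc_self hpq v)
    hqt hpt

theorem near_iff_of_matched (hM : IsInducedMatching G M) {a b : V} (ha : a ∈ A) (hb : b ∉ A)
    (hab : s(a, b) ∈ M) :
    s(a, b) ∈ N ↔ |zigzagColoring G N M A σ 3 6 a - zigzagColoring G N M A σ 3 6 b| ≤ 4 := by
  rw [zigzagColoring_of_matched hM ha hab, zigzagColoring_of_notMem hb, depth,
    matchShift_of_mem hM hab]
  rcases Int.units_eq_one_or (σ b) with h | h <;> rw [h] <;> split_ifs <;> simp_all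

theorem near_iff_of_unmatched (hM : IsInducedMatching G M) (hiv : HasUniformCrossLabels G N M A)
    {a b : V} (ha : a ∈ A) (hb : b ∉ A) (hab : G.Adj a b) (habM : s(a, b) ∉ M) :
    s(a, b) ∈ N ↔ |zigzagColoring G N M A σ 3 6 a - zigzagColoring G N M A σ 3 6 b| ≤ 4 := by
  classical
  set κ := zigzagColoring G N M A σ 3 6
  rw [near_iff_hasNearEdgeFromA hiv ha hb hab habM]
  have hκb : |κ b| = depth G N M A 3 6 b :=
    abs_zigzagColoring_of_notMem (by norm_num) (by norm_num) hb
  have key : if HasNearEdgeFromA G N M A b then |κ a| + |κ b| ≤ 4 else 5 ≤ |κ b| - |κ a| := by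
    by_cases hbM : ∀ x, s(x, b) ∉ M
    · have : |κ a| ≤ 1 := abs_zigzagColoring_le_one ha
      rw [hκb, depth, matchShift_of_forall_notMem hbM]
      split_ifs <;> linarith
    · obtain ⟨x, hx⟩ := not_forall_not.mp hbM
      have hκa : κ a = 0 :=
        zigzagColoring_of_unmatched ha fun y hy => habM (hM.mem_of_adj hy hx hab)
      have := depth_mem_Icc (G := G) (N := N) (M := M) (A := A) 3 6 b
      rw [hκa, hκb, abs_zero]
      split_ifs at this ⊢ <;> linarith [this.1, this.2]
  constructor
  · intro h
    rw [if_pos h] at key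
    exact (abs_sub _ _).trans key
  · intro h
    by_contra hn
    rw [if_neg hn] at key
    linarith [abs_sub_abs_le_abs_sub (κ b) (κ a), abs_sub_comm (κ b) (κ a)]

theorem zigzagColoring_near_iff (hA : ∀ ⦃u v⦄, G.Adj u v → u ∈ A → v ∈ A → s(u, v) ∈ N)
    (hM : IsInducedMatching G M) (hiv : HasUniformCrossLabels G N M A)
    (hσ : ∀ ⦃u v⦄, G.Adj u v → u ∉ A → v ∉ A → (σ u = σ v ↔ s(u, v) ∈ N)) ⦃u v : V⦄
    (huv : G.Adj u v) :
    s(u, v) ∈ N ↔ |zigzagColoring G N M A σ 3 6 u - zigzagColoring G N M A σ 3 6 v| ≤ 4 := by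
  refine near_iff_abs_sub_le_of_cases A (fun u v huv hu hv => iff_of_true (hA huv hu hv) ?_)
    (fun a b hab ha hb => ?_)
    (fun u v huv hu hv => near_iff_of_notMem_of_notMem (by norm_num) (by norm_num) (by norm_num)
      hσ huv hu hv) huv
  · have hu' : |zigzagColoring G N M A σ 3 6 u| ≤ 1 := abs_zigzagColoring_le_one hu
    have hv' : |zigzagColoring G N M A σ 3 6 v| ≤ 1 := abs_zigzagColoring_le_one hv
    linarith [abs_sub (zigzagColoring G N M A σ 3 6 u) (zigzagColoring G N M A σ 3 6 v)]
  · by_cases habM : s(a, b) ∈ M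
    · exact near_iff_of_matched hM ha hb habM
    · exact near_iff_of_unmatched hM hiv ha hb hab habM

theorem zigzagColoring_empty_near_iff
    (hA : ∀ ⦃u v⦄, G.Adj u v → u ∈ A → v ∈ A → s(u, v) ∈ N)
    (hiv : HasUniformCrossLabels G N ∅ A)
    (hσ : ∀ ⦃u v⦄, G.Adj u v → u ∉ A → v ∉ A → (σ u = σ v ↔ s(u, v) ∈ N)) ⦃u v : V⦄
    (huv : G.Adj u v) :
    s(u, v) ∈ N ↔ |zigzagColoring G N ∅ A σ 1 2 u - zigzagColoring G N ∅ A σ 1 2 v| ≤ 1 := by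
  have hunmatched (a : V) : ∀ b, s(a, b) ∉ (∅ : Set (Sym2 V)) := fun _ => Set.notMem_empty _
  refine near_iff_abs_sub_le_of_cases A (fun u v huv hu hv => iff_of_true (hA huv hu hv) ?_)
    (fun a b hab ha hb => ?_)
    (fun u v huv hu hv => near_iff_of_notMem_of_notMem (by norm_num) (by norm_num) (by norm_num)
      hσ huv hu hv) huv
  · simp [zigzagColoring_of_unmatched hu (hunmatched u),
      zigzagColoring_of_unmatched hv (hunmatched v)]
  · rw [near_iff_hasNearEdgeFromA hiv ha hb hab (hunmatched a b),
      zigzagColoring_of_unmatched ha (hunmatched a), zigzagColoring_of_notMem hb, zero_sub,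
      abs_neg, Int.abs_units_mul, depth, matchShift_of_forall_notMem (fun x => hunmatched x b)]
    split_ifs <;> simp_all

end Zigzag

open Zigzag in
theorem zigzag_lemma_general {V : Type*} (G : SimpleGraph V) (N : Set (Sym2 V))
    (A : Set V) (M : Set (Sym2 V))
    (hA : ∀ ⦃u v⦄, G.Adj u v → u ∈ A → v ∈ A → s(u, v) ∈ N)
    (hB : ∀ (v : V) (p : G.Walk v v), p.IsCycle → (∀ x ∈ p.support, x ∉ A) →
      Even {e : Sym2 V | e ∈ p.edges ∧ e ∉ N}.ncard)
    (hMind : ∀ e ∈ M, ∀ f ∈ M, e ≠ f → ∀ u ∈ e, ∀ v ∈ f, u ≠ v ∧ ¬ G.Adj u v)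
    (hiv : ∀ ⦃a a' b⦄, a ∈ A → a' ∈ A → b ∉ A → G.Adj a b → G.Adj a' b →
      s(a, b) ∉ M → s(a', b) ∉ M → (s(a, b) ∈ N ↔ s(a', b) ∈ N)) :
    (∃ c : V → ℕ, IsThresholdColoring G N 13 4 c) ∧
    (M = ∅ → ∃ c : V → ℕ, IsThresholdColoring G N 5 1 c) := by
  obtain ⟨σ, hσ⟩ := exists_sign_of_even_far_cycles A hB
  refine ⟨⟨_, isThresholdColoring_toNat (m := 6) (abs_zigzagColoring_le (by norm_num) (by norm_num))
    (zigzagColoring_near_iff hA hMind hiv hσ)⟩, ?_⟩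
  rintro rfl
  exact ⟨_, isThresholdColoring_toNat (m := 2) (abs_zigzagColoring_le (by norm_num) (by norm_num))
    (zigzagColoring_empty_near_iff hA hiv hσ)⟩

/-- Lemma (zigzag): let `(N, E \ N)` be a near-far-labeling of `G` and suppose there are a
bipartition `{A, Aᶜ}` of the vertex set and a set `M` of edges such that
(i) every edge induced by `A` is near;
(ii) every cycle contained in `Aᶜ` has an even number of far edges;
(iii) `M` is an induced matching each of whose edges joins `A` to `Aᶜ`;
(iv) any two edges outside `M` joining `A` to a common vertex of `Aᶜ` have the same label.
Then `G` has a `(13,4)`-threshold-coloring, and if moreover `M = ∅`, a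
`(5,1)`-threshold-coloring, with respect to `(N, E \ N)`. -/
theorem zigzag_lemma {V : Type*} (G : SimpleGraph V) (N : Set (Sym2 V))
    (hN : N ⊆ G.edgeSet) (A : Set V) (M : Set (Sym2 V)) (hME : M ⊆ G.edgeSet)
    (hA : ∀ ⦃u v⦄, G.Adj u v → u ∈ A → v ∈ A → s(u, v) ∈ N)
    (hB : ∀ (v : V) (p : G.Walk v v), p.IsCycle → (∀ x ∈ p.support, x ∉ A) →
      Even {e : Sym2 V | e ∈ p.edges ∧ e ∉ N}.ncard)
    (hMind : ∀ e ∈ M, ∀ f ∈ M, e ≠ f → ∀ u ∈ e, ∀ v ∈ f, u ≠ v ∧ ¬ G.Adj u v)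
    (hMAB : ∀ e ∈ M, ∃ a b, a ∈ A ∧ b ∉ A ∧ e = s(a, b))
    (hiv : ∀ ⦃a a' b⦄, a ∈ A → a' ∈ A → b ∉ A → G.Adj a b → G.Adj a' b →
      s(a, b) ∉ M → s(a', b) ∉ M → (s(a, b) ∈ N ↔ s(a', b) ∈ N)) :
    (∃ c : V → ℕ, IsThresholdColoring G N 13 4 c) ∧
    (M = ∅ → ∃ c : V → ℕ, IsThresholdColoring G N 5 1 c) :=
  zigzag_lemma_general G N A M hA hB hMind hiv
end

section
/- Let (r₁,t₁) and (r₂,t₂) be pairs of integers with r₁ ≥ t₁ ≥ 0, r₂ ≥ t₂ ≥ 0, and t₁ ≤ t₂. Set r = max{ r₂, (r₁ div (t₁+1))·(t₂+1) + (r₁ mod (t₁+1)) }, where div and mod denote integer quotient and remainder. Then (r₁,t₁) ≤ (r,t₂) and (r₂,t₂) ≤ (r,t₂). -/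
def ParamLE (r₁ t₁ r₂ t₂ : ℕ) : Prop :=
  ∃ φ : ℕ → ℕ,
    (∀ a b, a < r₁ → b < r₁ → a < b → φ a < φ b) ∧
    (∀ a, a < r₁ → φ a < r₂) ∧
    (∀ a b, a < r₁ → b < r₁ →
      (|(a : ℤ) - (b : ℤ)| ≤ (t₁ : ℤ) ↔ |(φ a : ℤ) - (φ b : ℤ)| ≤ (t₂ : ℤ)))

private def fstr (t₁ t₂ n : ℕ) : ℕ := n / (t₁ + 1) * (t₂ + 1) + n % (t₁ + 1)

private lemma fstr_spec (t₁ t₂ : ℕ) (h : t₁ ≤ t₂) (a b : ℕ) (hab : a ≤ b) :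
    (a < b → fstr t₁ t₂ a < fstr t₁ t₂ b) ∧
    (((b:ℤ) - a ≤ t₁) ↔ ((fstr t₁ t₂ b : ℤ) - fstr t₁ t₂ a ≤ t₂)) := by
  have hq : a/(t₁+1) ≤ b/(t₁+1) := Nat.div_le_div_right hab
  obtain ⟨d, hd⟩ : ∃ d, b/(t₁+1) = a/(t₁+1) + d := ⟨_, (Nat.add_sub_cancel' hq).symm⟩
  unfold fstr
  rw [hd]
  have ha : a = (t₁+1) * (a/(t₁+1)) + a % (t₁+1) := (Nat.div_add_mod a (t₁+1)).symm
  have hb : b = (t₁+1) * (a/(t₁+1)) + (t₁+1) * d + b % (t₁+1) := by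
    conv_lhs => rw [← Nat.div_add_mod b (t₁+1), hd]
    ring
  have hsa : a % (t₁+1) < t₁+1 := Nat.mod_lt _ (by omega)
  have hsb : b % (t₁+1) < t₁+1 := Nat.mod_lt _ (by omega)
  set qa := a/(t₁+1) with hqa
  set sa := a % (t₁+1) with hsa'
  set sb := b % (t₁+1) with hsb'
  clear_value qa sa sb
  clear hd hqa hsa' hsb' hq
  match d with
  | 0 =>
    simp only [Nat.add_zero, Nat.mul_zero] at hb ⊢
    generalize (t₁+1) * qa = X at ha hb
    generalize qa * (t₂+1) = Y
    constructor
    · omega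
    · omega
  | 1 =>
    have hf : (qa + 1) * (t₂+1) = qa * (t₂+1) + (t₂+1) := by ring
    simp only [Nat.mul_one] at hb
    rw [hf]
    generalize (t₁+1) * qa = X at ha hb
    generalize qa * (t₂+1) = Y
    constructor
    · omega
    · omega
  | (d+2) =>
    have hf : (qa + (d+2)) * (t₂+1) = qa * (t₂+1) + (d+2) * (t₂+1) := by ring
    have h1 : 2 * (t₁+1) ≤ (t₁+1) * (d+2) := by nlinarith
    have h2 : 2 * (t₂+1) ≤ (d+2) * (t₂+1) := by nlinarith
    rw [hf]
    generalize (t₁+1) * qa = X at ha hb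
    generalize (t₁+1) * (d+2) = Z at hb h1
    generalize qa * (t₂+1) = Y
    generalize (d+2) * (t₂+1) = W at h2
    constructor
    · omega
    · omega

private lemma fstr_mono_le (t₁ t₂ : ℕ) (h : t₁ ≤ t₂) {a b : ℕ} (hab : a ≤ b) :
    fstr t₁ t₂ a ≤ fstr t₁ t₂ b := by
  rcases eq_or_lt_of_le hab with rfl | hlt
  · exact le_rfl
  · exact ((fstr_spec t₁ t₂ h a b hab).1 hlt).le

/-- If `r₁ ≥ t₁ ≥ 0`, `r₂ ≥ t₂ ≥ 0` and `t₁ ≤ t₂`, then with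
`r = max {r₂, (r₁ div (t₁+1))·(t₂+1) + (r₁ mod (t₁+1))}` we have both
`(r₁,t₁) ≤ (r,t₂)` and `(r₂,t₂) ≤ (r,t₂)`. -/
theorem paramLE_common_upper_bound (r₁ t₁ r₂ t₂ : ℕ)
    (h₁ : t₁ ≤ r₁) (h₂ : t₂ ≤ r₂) (h : t₁ ≤ t₂) :
    ParamLE r₁ t₁ (max r₂ (r₁ / (t₁ + 1) * (t₂ + 1) + r₁ % (t₁ + 1))) t₂ ∧
    ParamLE r₂ t₂ (max r₂ (r₁ / (t₁ + 1) * (t₂ + 1) + r₁ % (t₁ + 1))) t₂ := by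
  constructor
  · refine ⟨fstr t₁ t₂, ?_, ?_, ?_⟩
    · intro a b _ _ hab
      exact (fstr_spec t₁ t₂ h a b hab.le).1 hab
    · intro a ha
      have := (fstr_spec t₁ t₂ h a r₁ ha.le).1 ha
      have hr : fstr t₁ t₂ r₁ = r₁ / (t₁ + 1) * (t₂ + 1) + r₁ % (t₁ + 1) := rfl
      omega
    · intro a b _ _
      rcases le_total a b with hab | hab
      · have hf : fstr t₁ t₂ a ≤ fstr t₁ t₂ b := fstr_mono_le t₁ t₂ h hab
        have := (fstr_spec t₁ t₂ h a b hab).2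
        rw [abs_sub_comm (a:ℤ) b, abs_sub_comm ((fstr t₁ t₂ a : ℤ)) _,
          abs_of_nonneg (by push_cast; omega : (0:ℤ) ≤ (b:ℤ) - a),
          abs_of_nonneg (by push_cast; omega : (0:ℤ) ≤ (fstr t₁ t₂ b : ℤ) - fstr t₁ t₂ a)]
        exact this
      · have hf : fstr t₁ t₂ b ≤ fstr t₁ t₂ a := fstr_mono_le t₁ t₂ h hab
        have := (fstr_spec t₁ t₂ h b a hab).2
        rw [abs_of_nonneg (by push_cast; omega : (0:ℤ) ≤ (a:ℤ) - b),
          abs_of_nonneg (by push_cast; omega : (0:ℤ) ≤ (fstr t₁ t₂ a : ℤ) - fstr t₁ t₂ b)]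
        exact this
  · exact ⟨id, fun a b _ _ hab => hab,
      fun a ha => lt_of_lt_of_le ha (le_max_left _ _),
      fun a b _ _ => Iff.rfl⟩
end
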